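/- If (λ, w) is a classical solution of the supercritical cell problem at (x, p) and (λ̄, w̄) is a classical solution of the supercritical cell problem at (x̄, p̄), then min_{y ∈ ℝ^m}(|σ(x,y)^T p|² − |σ(x̄,y)^T p̄|²) ≤ λ − λ̄ ≤ max_{y ∈ ℝ^m}(|σ(x,y)^T p|² − |σ(x̄,y)^T p̄|²). -/

import Mathlib

open Matrix MeasureTheory Set

noncomputable section

/-- Euclidean norm of a vector in `ℝ^k`. -/
def en {k : ℕ} (v : Fin k → ℝ) : ℝ := Real.sqrt (v ⬝ᵥ v)

/-- Squared Euclidean norm. -/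
def sq2 {k : ℕ} (v : Fin k → ℝ) : ℝ := v ⬝ᵥ v

/-- Partial derivative in the `i`-th coordinate direction. -/
def pd {m : ℕ} (w : (Fin m → ℝ) → ℝ) (i : Fin m) (y : Fin m → ℝ) : ℝ :=
  fderiv ℝ w y (Pi.single i 1)

/-- Gradient. -/
def vgrad {m : ℕ} (w : (Fin m → ℝ) → ℝ) (y : Fin m → ℝ) : Fin m → ℝ := fun i => pd w i y

/-- Hessian matrix. -/
def vhess {m : ℕ} (w : (Fin m → ℝ) → ℝ) (y : Fin m → ℝ) : Matrix (Fin m) (Fin m) ℝ :=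
  Matrix.of fun i j => pd (pd w j) i y

/-- `ℤ^m`-periodicity. -/
def ZPer {m : ℕ} (w : (Fin m → ℝ) → ℝ) : Prop :=
  ∀ (y : Fin m → ℝ) (k : Fin m → ℤ), w (y + fun i => (k i : ℝ)) = w y

/-- Standing hypotheses on the data. -/
structure StandingHyp {n m r : ℕ}
    (σ : (Fin n → ℝ) → (Fin m → ℝ) → Matrix (Fin n) (Fin r) ℝ)
    (b : (Fin m → ℝ) → Fin m → ℝ)
    (τ : (Fin m → ℝ) → Matrix (Fin m) (Fin r) ℝ) : Prop where
  σ_bdd : ∃ C : ℝ, ∀ x y i j, |σ x y i j| ≤ C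
  σ_lip : ∃ L : ℝ, ∀ x x' y y' i j, |σ x y i j - σ x' y' i j| ≤ L * (en (x - x') + en (y - y'))
  σ_per : ∀ x y (k : Fin m → ℤ), σ x (y + fun l => (k l : ℝ)) = σ x y
  b_lip : ∃ L : ℝ, ∀ y y' i, |b y i - b y' i| ≤ L * en (y - y')
  b_per : ∀ y (k : Fin m → ℤ), b (y + fun l => (k l : ℝ)) = b y
  τ_lip : ∃ L : ℝ, ∀ y y' i j, |τ y i j - τ y' i j| ≤ L * en (y - y')
  τ_per : ∀ y (k : Fin m → ℤ), τ (y + fun l => (k l : ℝ)) = τ y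
  τ_nondeg : ∃ θ : ℝ, 0 < θ ∧ ∀ y ξ, θ * sq2 ξ ≤ sq2 ((τ y)ᵀ *ᵥ ξ)

/-- Classical solution of the critical cell problem at `(x, p)`. -/
def IsCriticalSol {n m r : ℕ}
    (σ : (Fin n → ℝ) → (Fin m → ℝ) → Matrix (Fin n) (Fin r) ℝ)
    (b : (Fin m → ℝ) → Fin m → ℝ)
    (τ : (Fin m → ℝ) → Matrix (Fin m) (Fin r) ℝ)
    (x p : Fin n → ℝ) (lam : ℝ) (w : (Fin m → ℝ) → ℝ) : Prop :=
  ContDiff ℝ 2 w ∧ ZPer w ∧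
    ∀ y, lam = sq2 ((σ x y)ᵀ *ᵥ p)
        + 2 * ((τ y *ᵥ ((σ x y)ᵀ *ᵥ p)) ⬝ᵥ vgrad w y)
        + b y ⬝ᵥ vgrad w y
        + sq2 ((τ y)ᵀ *ᵥ vgrad w y)
        + Matrix.trace (τ y * (τ y)ᵀ * vhess w y)

/-- Classical solution of the supercritical cell problem at `(x, p)`. -/
def IsSupercriticalSol {n m r : ℕ}
    (σ : (Fin n → ℝ) → (Fin m → ℝ) → Matrix (Fin n) (Fin r) ℝ)
    (b : (Fin m → ℝ) → Fin m → ℝ)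
    (τ : (Fin m → ℝ) → Matrix (Fin m) (Fin r) ℝ)
    (x p : Fin n → ℝ) (lam : ℝ) (w : (Fin m → ℝ) → ℝ) : Prop :=
  ContDiff ℝ 2 w ∧ ZPer w ∧
    ∀ y, lam = sq2 ((σ x y)ᵀ *ᵥ p) + b y ⬝ᵥ vgrad w y
        + Matrix.trace (τ y * (τ y)ᵀ * vhess w y)

/-- Classical solution of the subcritical cell problem at `(x, p)`. -/
def IsSubcriticalSol {n m r : ℕ}
    (σ : (Fin n → ℝ) → (Fin m → ℝ) → Matrix (Fin n) (Fin r) ℝ)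
    (τ : (Fin m → ℝ) → Matrix (Fin m) (Fin r) ℝ)
    (x p : Fin n → ℝ) (lam : ℝ) (w : (Fin m → ℝ) → ℝ) : Prop :=
  ContDiff ℝ 1 w ∧ ZPer w ∧
    ∀ y, lam = sq2 ((τ y)ᵀ *ᵥ vgrad w y + (σ x y)ᵀ *ᵥ p)

/-!
At a maximum point `z` of the periodic function `w - wbar` the gradients of `w` and `wbar`
agree and the Hessian of `w - wbar` is negative semidefinite, so
`tr (τ τᵀ D²(w - wbar)) z ≤ 0`. Subtracting the two cell equations at `z` gives
`lam - lambar ≤ F z ≤ max F` for `F y = |σ(x,y)ᵀp|² - |σ(xbar,y)ᵀpbar|²`; exchanging the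
two solutions gives the lower bound. `F` attains its extrema because it is continuous and
`ℤ^m`-periodic.
-/

open Filter Topology

lemma continuous_en {k : ℕ} : Continuous (en (k := k)) :=
  Real.continuous_sqrt.comp (continuous_id.dotProduct continuous_id)

namespace ZPer

variable {m : ℕ} {f g : (Fin m → ℝ) → ℝ}

lemma neg (hf : ZPer f) : ZPer (-f) := fun y k => by
  simp only [Pi.neg_apply, hf y k]

lemma sub (hf : ZPer f) (hg : ZPer g) : ZPer (f - g) := fun y k => by
  simp only [Pi.sub_apply, hf y k, hg y k]

lemma exists_mem_Icc_eq (hf : ZPer f) (y : Fin m → ℝ) :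
    ∃ y' ∈ Icc (0 : Fin m → ℝ) 1, f y' = f y := by
  refine ⟨fun i => Int.fract (y i),
    ⟨fun i => Int.fract_nonneg _, fun i => (Int.fract_lt_one _).le⟩, ?_⟩
  have hy : ((fun i => Int.fract (y i)) + fun i => ((⌊y i⌋ : ℤ) : ℝ)) = y :=
    funext fun i => Int.fract_add_floor (y i)
  rw [← hf _ fun i => ⌊y i⌋, hy]

lemma exists_forall_ge (hf : ZPer f) (hc : Continuous f) : ∃ z, ∀ y, f y ≤ f z := by
  obtain ⟨z, -, hz⟩ :=
    isCompact_Icc.exists_isMaxOn (nonempty_Icc.2 zero_le_one) hc.continuousOn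
  refine ⟨z, fun y => ?_⟩
  obtain ⟨y', hy', hfy'⟩ := hf.exists_mem_Icc_eq y
  exact hfy' ▸ hz hy'

lemma exists_forall_le (hf : ZPer f) (hc : Continuous f) : ∃ z, ∀ y, f z ≤ f y := by
  simpa using hf.neg.exists_forall_ge hc.neg

end ZPer

lemma IsLocalMax.deriv_deriv_nonpos {f : ℝ → ℝ} {a : ℝ} (h : IsLocalMax f a)
    (hc : ContinuousAt f a) : deriv (deriv f) a ≤ 0 := by
  by_contra! hpos
  -- the second derivative test would make `a` a local minimum too, so `f` is locally constant
  have hconst : f =ᶠ[𝓝 a] fun _ => f a :=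
    (h.and (isLocalMin_of_deriv_deriv_pos hpos h.deriv_eq_zero hc)).mono
      fun _ hx => le_antisymm hx.1 hx.2
  have := hconst.deriv.deriv_eq
  simp only [deriv_const', deriv_const] at this
  exact hpos.ne' this

lemma Matrix.trace_mul_transpose_mul_nonpos {ι κ : Type*} [Fintype ι] [Fintype κ]
    (M : Matrix ι κ ℝ) {H : Matrix ι ι ℝ} (hH : ∀ c, c ⬝ᵥ (H *ᵥ c) ≤ 0) :
    trace (M * Mᵀ * H) ≤ 0 := by
  have hdiag (k : κ) : (Mᵀ * H * M) k k = (fun i => M i k) ⬝ᵥ (H *ᵥ fun i => M i k) := by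
    simp only [mul_apply, transpose_apply, dotProduct, mulVec, Finset.sum_mul, Finset.mul_sum]
    rw [Finset.sum_comm]
    exact Finset.sum_congr rfl fun _ _ => Finset.sum_congr rfl fun _ _ => by ring
  rw [trace_mul_cycle, trace_mul_comm, ← Matrix.mul_assoc]
  exact Finset.sum_nonpos fun k _ => (hdiag k).trans_le (hH _)

section Derivatives

variable {m : ℕ} {v v' : (Fin m → ℝ) → ℝ}

lemma fderiv_apply_eq_dotProduct_vgrad (y c : Fin m → ℝ) : fderiv ℝ v y c = c ⬝ᵥ vgrad v y := by
  conv_lhs => rw [← Finset.univ_sum_single c]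
  rw [map_sum]
  refine Finset.sum_congr rfl fun i _ => ?_
  have hs : Pi.single i (c i) = c i • (Pi.single i 1 : Fin m → ℝ) := by
    rw [← Pi.single_smul, smul_eq_mul, mul_one]
  rw [hs, map_smul, smul_eq_mul]
  rfl

lemma contDiff_pd (hv : ContDiff ℝ 2 v) (j : Fin m) : ContDiff ℝ 1 (pd v j) :=
  (hv.fderiv_right (m := 1) (by norm_num)).clm_apply contDiff_const

lemma pd_sub {y : Fin m → ℝ} (hv : DifferentiableAt ℝ v y) (hv' : DifferentiableAt ℝ v' y)
    (i : Fin m) : pd (v - v') i y = pd v i y - pd v' i y := by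
  simp only [pd, fderiv_sub hv hv', _root_.sub_apply]

lemma vgrad_sub (hv : Differentiable ℝ v) (hv' : Differentiable ℝ v') (y : Fin m → ℝ) :
    vgrad (v - v') y = vgrad v y - vgrad v' y :=
  funext fun i => pd_sub (hv y) (hv' y) i

lemma vhess_sub (hv : ContDiff ℝ 2 v) (hv' : ContDiff ℝ 2 v') (y : Fin m → ℝ) :
    vhess (v - v') y = vhess v y - vhess v' y := by
  have hd : ∀ f : (Fin m → ℝ) → ℝ, ContDiff ℝ 2 f → Differentiable ℝ f :=
    fun f hf => hf.differentiable (by norm_num)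
  ext i j
  have hpd : pd (v - v') j = pd v j - pd v' j :=
    funext fun y => pd_sub (hd v hv y) (hd v' hv' y) j
  simp only [vhess, of_apply, Matrix.sub_apply, hpd]
  exact pd_sub ((contDiff_pd hv j).differentiable one_ne_zero y)
    ((contDiff_pd hv' j).differentiable one_ne_zero y) i

lemma hasDerivAt_comp_line (hv : Differentiable ℝ v) (z c : Fin m → ℝ) (t : ℝ) :
    HasDerivAt (fun s : ℝ => v (z + s • c)) (c ⬝ᵥ vgrad v (z + t • c)) t := by
  rw [← fderiv_apply_eq_dotProduct_vgrad]
  have hline : HasDerivAt (fun s : ℝ => z + s • c) c t := by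
    simpa using ((hasDerivAt_id t).smul_const c).const_add z
  exact (hv _).hasFDerivAt.comp_hasDerivAt t hline

lemma deriv_deriv_comp_line (hv : ContDiff ℝ 2 v) (z c : Fin m → ℝ) :
    deriv (deriv fun t : ℝ => v (z + t • c)) 0 = c ⬝ᵥ (vhess v z *ᵥ c) := by
  have hpd (j : Fin m) : Differentiable ℝ (pd v j) := (contDiff_pd hv j).differentiable one_ne_zero
  have h1 : deriv (fun t : ℝ => v (z + t • c)) = fun t => ∑ j, c j * pd v j (z + t • c) :=
    funext fun t => (hasDerivAt_comp_line (hv.differentiable (by norm_num)) z c t).deriv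
  have h2 : HasDerivAt (fun t : ℝ => ∑ j, c j * pd v j (z + t • c))
      (∑ j, c j * (c ⬝ᵥ vgrad (pd v j) z)) 0 :=
    HasDerivAt.fun_sum fun j _ => by
      simpa using (hasDerivAt_comp_line (hpd j) z c 0).const_mul (c j)
  rw [h1, h2.deriv]
  simp only [dotProduct, mulVec, vgrad, vhess, of_apply, Finset.mul_sum]
  rw [Finset.sum_comm]
  exact Finset.sum_congr rfl fun _ _ => Finset.sum_congr rfl fun _ _ => by ring

lemma IsLocalMax.vgrad_eq_zero {z : Fin m → ℝ} (h : IsLocalMax v z) : vgrad v z = 0 :=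
  funext fun i => by simp [vgrad, pd, h.fderiv_eq_zero]

lemma IsLocalMax.dotProduct_vhess_mulVec_nonpos {z : Fin m → ℝ} (h : IsLocalMax v z)
    (hv : ContDiff ℝ 2 v) (c : Fin m → ℝ) : c ⬝ᵥ (vhess v z *ᵥ c) ≤ 0 := by
  have hline : Continuous fun t : ℝ => z + t • c := by fun_prop
  rw [← deriv_deriv_comp_line hv z c]
  refine IsLocalMax.deriv_deriv_nonpos ?_ (hv.continuous.comp hline).continuousAt
  exact IsLocalMax.comp_continuous (g := fun t : ℝ => z + t • c) (by simpa using h)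
    hline.continuousAt

end Derivatives

lemma IsSupercriticalSol.exists_sub_le {n m r : ℕ}
    {σ : (Fin n → ℝ) → (Fin m → ℝ) → Matrix (Fin n) (Fin r) ℝ}
    {b : (Fin m → ℝ) → Fin m → ℝ} {τ : (Fin m → ℝ) → Matrix (Fin m) (Fin r) ℝ}
    {x xbar p pbar : Fin n → ℝ} {lam lambar : ℝ} {w wbar : (Fin m → ℝ) → ℝ}
    (h : IsSupercriticalSol σ b τ x p lam w)
    (hbar : IsSupercriticalSol σ b τ xbar pbar lambar wbar) :
    ∃ z, lam - lambar ≤ sq2 ((σ x z)ᵀ *ᵥ p) - sq2 ((σ xbar z)ᵀ *ᵥ pbar) := by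
  obtain ⟨hw, hw_per, hw_eq⟩ := h
  obtain ⟨hwbar, hwbar_per, hwbar_eq⟩ := hbar
  obtain ⟨z, hz⟩ := (hw_per.sub hwbar_per).exists_forall_ge (hw.sub hwbar).continuous
  have hmax : IsLocalMax (w - wbar) z := Eventually.of_forall hz
  have hgrad : vgrad w z = vgrad wbar z := by
    rw [← sub_eq_zero, ← vgrad_sub (hw.differentiable (by norm_num))
      (hwbar.differentiable (by norm_num))]
    exact hmax.vgrad_eq_zero
  have htrace : trace (τ z * (τ z)ᵀ * vhess w z) ≤ trace (τ z * (τ z)ᵀ * vhess wbar z) := by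
    rw [← sub_nonpos, ← trace_sub, ← Matrix.mul_sub, ← vhess_sub hw hwbar]
    exact trace_mul_transpose_mul_nonpos _ (hmax.dotProduct_vhess_mulVec_nonpos (hw.sub hwbar))
  refine ⟨z, ?_⟩
  linarith [hw_eq z, hwbar_eq z, congrArg (b z ⬝ᵥ ·) hgrad]

namespace StandingHyp

variable {n m r : ℕ} {σ : (Fin n → ℝ) → (Fin m → ℝ) → Matrix (Fin n) (Fin r) ℝ}
  {b : (Fin m → ℝ) → Fin m → ℝ} {τ : (Fin m → ℝ) → Matrix (Fin m) (Fin r) ℝ}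

lemma continuous_sigma (hyp : StandingHyp σ b τ) (x : Fin n → ℝ) : Continuous (σ x) := by
  obtain ⟨L, hL⟩ := hyp.σ_lip
  refine continuous_matrix fun i j => continuous_iff_continuousAt.2 fun y => ?_
  rw [ContinuousAt, tendsto_iff_norm_sub_tendsto_zero]
  refine squeeze_zero (fun _ => norm_nonneg _) (fun y' => hL x x y' y i j) ?_
  have hc : Continuous fun y' => L * (en (x - x) + en (y' - y)) := by
    have := continuous_en (k := m); fun_prop
  simpa [en] using hc.tendsto y

lemma continuous_sq2_transpose_mulVec (hyp : StandingHyp σ b τ) (x p : Fin n → ℝ) :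
    Continuous fun y => sq2 ((σ x y)ᵀ *ᵥ p) :=
  have h := (hyp.continuous_sigma x).matrix_transpose.matrix_mulVec continuous_const
  h.dotProduct h

end StandingHyp

/-- the difference of two supercritical effective Hamiltonian values is
sandwiched between the (attained) min and max of `|σ(x,y)ᵀp|² − |σ(x̄,y)ᵀp̄|²` over `y`. -/
theorem stmt9 {n m r : ℕ}
    (σ : (Fin n → ℝ) → (Fin m → ℝ) → Matrix (Fin n) (Fin r) ℝ)
    (b : (Fin m → ℝ) → Fin m → ℝ)
    (τ : (Fin m → ℝ) → Matrix (Fin m) (Fin r) ℝ)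
    (hyp : StandingHyp σ b τ)
    (x xbar p pbar : Fin n → ℝ) (lam lambar : ℝ) (w wbar : (Fin m → ℝ) → ℝ)
    (h : IsSupercriticalSol σ b τ x p lam w)
    (hbar : IsSupercriticalSol σ b τ xbar pbar lambar wbar) :
    ∃ y₀ y₁ : Fin m → ℝ,
      (∀ y, sq2 ((σ x y₀)ᵀ *ᵥ p) - sq2 ((σ xbar y₀)ᵀ *ᵥ pbar)
          ≤ sq2 ((σ x y)ᵀ *ᵥ p) - sq2 ((σ xbar y)ᵀ *ᵥ pbar)) ∧
      (∀ y, sq2 ((σ x y)ᵀ *ᵥ p) - sq2 ((σ xbar y)ᵀ *ᵥ pbar)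
          ≤ sq2 ((σ x y₁)ᵀ *ᵥ p) - sq2 ((σ xbar y₁)ᵀ *ᵥ pbar)) ∧
      sq2 ((σ x y₀)ᵀ *ᵥ p) - sq2 ((σ xbar y₀)ᵀ *ᵥ pbar) ≤ lam - lambar ∧
      lam - lambar ≤ sq2 ((σ x y₁)ᵀ *ᵥ p) - sq2 ((σ xbar y₁)ᵀ *ᵥ pbar) := by
  set F : (Fin m → ℝ) → ℝ := fun y => sq2 ((σ x y)ᵀ *ᵥ p) - sq2 ((σ xbar y)ᵀ *ᵥ pbar)
  have hF : Continuous F :=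
    (hyp.continuous_sq2_transpose_mulVec x p).sub (hyp.continuous_sq2_transpose_mulVec xbar pbar)
  have hF_per : ZPer F := fun y k => by simp only [F, hyp.σ_per]
  obtain ⟨y₀, hy₀⟩ := hF_per.exists_forall_le hF
  obtain ⟨y₁, hy₁⟩ := hF_per.exists_forall_ge hF
  obtain ⟨z, hz⟩ := h.exists_sub_le hbar
  obtain ⟨z', hz'⟩ := hbar.exists_sub_le h
  exact ⟨y₀, y₁, hy₀, hy₁, by linarith [hy₀ z'], hz.trans (hy₁ z)⟩

end
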